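/- arXiv:1910.09044 — 7 statements merged into one kernel-verified Lean document; each statement's English description precedes it below -/
import Mathlib

section
/- Let k, ℓ, r be integers with 2 ≤ ℓ ≤ k−1 and ℓ·(1 − 1/e) ≤ r ≤ ℓ−1. Let B be a set of k vertices, let Υ ⊆ B with |Υ| = ℓ, and let F be a fixed forest on vertex set Υ having exactly r edges. Then the number of labelled trees T on vertex set B whose induced subgraph on Υ equals F is at most (ℓ/(ℓ−r))^{ℓ−r} · (k−ℓ)^{k−r−2} · (ℓ+1)^{k−ℓ−1}. -/
/-!
Root every tree `T` at a vertex `root ∉ Υ` and let `parent v` be the neighbour of `v` on its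
path to the root. Since `T[Υ] = F`, every component `K` of `F` has exactly one vertex whose parent
lies outside `Υ` (its top), and `v ↦ {v, parent v}` matches the other vertices of `Υ` with the
edges of `F`, so `F` has `c = ℓ - r` components. The tree is recovered from `F`, the top of each
component and its parent, and the parents of the `m - 1` non-root vertices outside `Υ`
(`m = k - ℓ`), which gives at most `∏ |K| · m ^ c · (k - 1) ^ (m - 1)` trees. AM-GM bounds
`∏ |K| ≤ (ℓ / c) ^ c`, and `2 (k - 1) ≤ m (ℓ + 1)` together with `m ≤ 2 ^ (m - 1)` bounds the rest.
-/

open SimpleGraph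

namespace SimpleGraph.IsTree

variable {V : Type*} {T : SimpleGraph V} {root : V}

variable (root) in
noncomputable def pathToRoot (hT : T.IsTree) (v : V) : T.Walk v root :=
  (hT.existsUnique_path v root).choose

variable (root) in
noncomputable def parent (hT : T.IsTree) (v : V) : V := (hT.pathToRoot root v).snd

lemma isPath_pathToRoot (hT : T.IsTree) (v : V) : (hT.pathToRoot root v).IsPath :=
  (hT.existsUnique_path v root).choose_spec.1

lemma eq_pathToRoot (hT : T.IsTree) {v : V} {p : T.Walk v root} (hp : p.IsPath) :
    p = hT.pathToRoot root v :=
  (hT.existsUnique_path v root).choose_spec.2 p hp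

lemma adj_parent (hT : T.IsTree) {v : V} (hv : v ≠ root) : T.Adj v (hT.parent root v) :=
  Walk.adj_snd (Walk.not_nil_of_ne hv)

lemma length_pathToRoot_parent (hT : T.IsTree) {v : V} (hv : v ≠ root) :
    (hT.pathToRoot root (hT.parent root v)).length + 1 = (hT.pathToRoot root v).length := by
  rw [parent, ← hT.eq_pathToRoot (hT.isPath_pathToRoot v).tail]
  exact Walk.length_tail_add_one (Walk.not_nil_of_ne hv)

lemma parent_parent_ne_self (hT : T.IsTree) {v : V} (hv : v ≠ root)
    (hpv : hT.parent root v ≠ root) : hT.parent root (hT.parent root v) ≠ v := by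
  intro h
  have h₁ := hT.length_pathToRoot_parent hv
  have h₂ := hT.length_pathToRoot_parent hpv
  rw [h] at h₂
  omega

lemma adj_iff_parent (hT : T.IsTree) {a b : V} :
    T.Adj a b ↔ (a ≠ root ∧ hT.parent root a = b) ∨ (b ≠ root ∧ hT.parent root b = a) := by
  refine ⟨fun hab => ?_, ?_⟩
  · by_cases hb : b ∈ (hT.pathToRoot root a).support
    · refine .inl ⟨?_, (hT.isAcyclic.eq_snd_of_adj_start (hT.isPath_pathToRoot a) hab hb).symm⟩
      rintro rfl
      rw [(Walk.isPath_iff_nil.mp (hT.isPath_pathToRoot a)).eq_nil, Walk.mem_support_nil_iff] at hb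
      exact hab.ne hb.symm
    · refine .inr ⟨fun h => hb (h ▸ Walk.end_mem_support _), ?_⟩
      rw [parent, ← hT.eq_pathToRoot ((hT.isPath_pathToRoot a).cons hb), Walk.snd_cons]
      exact hab.symm
  · rintro (⟨ha, rfl⟩ | ⟨hb, rfl⟩)
    · exact hT.adj_parent ha
    · exact (hT.adj_parent hb).symm

lemma parent_eq_penultimate (hT : T.IsTree) {a b : V} {p : T.Walk a b} (hp : p.IsPath)
    (hnil : ¬p.Nil) (hroot : root ∉ p.support) (hsnd : hT.parent root p.snd = a) :
    hT.parent root b = p.penultimate := by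
  induction p with
  | nil => exact absurd Walk.Nil.nil hnil
  | @cons a x b hax q ih =>
    rw [Walk.snd_cons] at hsnd
    have hq := (Walk.cons_isPath_iff _ _).mp hp
    by_cases hqnil : q.Nil
    · obtain rfl := hqnil.eq
      rw [Walk.eq_nil_iff_nil.mpr hqnil]
      exact hsnd
    rw [Walk.penultimate_cons_of_not_nil _ _ hqnil]
    refine ih hq.1 hqnil (fun h => hroot (Walk.support_cons _ _ ▸ List.mem_cons_of_mem _ h)) ?_
    rcases hT.adj_iff_parent.mp (Walk.adj_snd hqnil) with ⟨-, h⟩ | ⟨-, h⟩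
    · exact absurd (hsnd ▸ h ▸ q.getVert_mem_support 1) hq.2
    · exact h

/-- A path avoiding the root climbs to the lowest common ancestor of its ends and descends. -/
lemma snd_eq_parent_or_parent_eq_penultimate (hT : T.IsTree) {a b : V} {p : T.Walk a b}
    (hp : p.IsPath) (hab : a ≠ b) (hroot : root ∉ p.support) :
    p.snd = hT.parent root a ∨ hT.parent root b = p.penultimate := by
  have hnil : ¬p.Nil := Walk.not_nil_of_ne hab
  rcases hT.adj_iff_parent.mp (Walk.adj_snd hnil) with ⟨-, h⟩ | ⟨-, h⟩
  · exact .inl h.symm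
  · exact .inr (hT.parent_eq_penultimate hp hnil hroot h)

variable {s : Set V} {F : SimpleGraph s}

lemma exists_parent_notMem_of_induce_eq (hT : T.IsTree) (hroot : root ∉ s)
    (hF : T.induce s = F) (K : F.ConnectedComponent) :
    ∃ u : s, F.connectedComponentMk u = K ∧ hT.parent root u ∉ s := by
  subst hF
  obtain ⟨v, rfl⟩ := K.exists_rep
  induction hn : (hT.pathToRoot root v).length using Nat.strong_induction_on generalizing v with
  | _ n ih =>
    by_cases hpv : hT.parent root v ∈ s
    · have hv : (v : V) ≠ root := fun h => hroot (h ▸ v.2)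
      have hlt : (hT.pathToRoot root (hT.parent root v)).length < n := by
        have := hT.length_pathToRoot_parent hv
        omega
      obtain ⟨u, hu, hpu⟩ := ih _ hlt ⟨_, hpv⟩ rfl
      have hadj : (T.induce s).Adj v ⟨_, hpv⟩ := hT.adj_parent hv
      exact ⟨u, hu.trans (ConnectedComponent.connectedComponentMk_eq_of_adj hadj).symm, hpu⟩
    · exact ⟨v, rfl, hpv⟩

lemma eq_of_parent_notMem_of_induce_eq (hT : T.IsTree) (hroot : root ∉ s)
    (hF : T.induce s = F) {u u' : s} (h : F.connectedComponentMk u = F.connectedComponentMk u')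
    (hu : hT.parent root u ∉ s) (hu' : hT.parent root u' ∉ s) : u = u' := by
  subst hF
  by_contra hne
  obtain ⟨p, hp⟩ := (ConnectedComponent.exact h).exists_isPath
  set q := p.map (Embedding.induce s).toHom
  have hq : q.IsPath := hp.map Subtype.val_injective
  have hsupp : ∀ x ∈ q.support, x ∈ s := by
    simp only [q, Walk.support_map, List.mem_map]
    rintro _ ⟨x, -, rfl⟩
    exact x.2
  rcases hT.snd_eq_parent_or_parent_eq_penultimate hq (Subtype.val_injective.ne hne)
    (fun h => hroot (hsupp _ h)) with h | h
  · exact hu (h ▸ hsupp _ (q.getVert_mem_support 1))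
  · exact hu' (h ▸ hsupp _ (q.getVert_mem_support _))

lemma ncard_edgeSet_add_card_connectedComponent [Finite V] (hT : T.IsTree) (hroot : root ∉ s)
    (hF : T.induce s = F) : F.edgeSet.ncard + Nat.card F.ConnectedComponent = Nat.card s := by
  subst hF
  have hne : ∀ v : s, (v : V) ≠ root := fun v h => hroot (h ▸ v.2)
  set A : Set s := {v | hT.parent root v ∈ s}
  have hedges : A.ncard = (T.induce s).edgeSet.ncard := by
    refine Set.ncard_congr (fun v hv => s(v, ⟨_, hv⟩)) (fun v _ => ?_) ?_ ?_
    · exact (mem_edgeSet _).mpr (hT.adj_parent (hne v))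
    · intro v w hv hw h
      rcases Sym2.eq_iff.mp h with ⟨h, -⟩ | ⟨rfl, h⟩
      · exact h
      · exact absurd (congrArg Subtype.val h) (hT.parent_parent_ne_self (hne w) (hne ⟨_, hw⟩))
    · intro e he
      induction e using Sym2.ind with | _ x y =>
      rcases (hT.adj_iff_parent (root := root)).mp he with ⟨-, h⟩ | ⟨-, h⟩
      · have h : hT.parent root x = y := h
        exact ⟨x, show _ ∈ s from h ▸ y.2, by simp only [h]⟩
      · have h : hT.parent root y = x := h
        exact ⟨y, show _ ∈ s from h ▸ x.2, by simp only [h]; exact Sym2.eq_swap⟩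
  have hcomponents : Aᶜ.ncard = Nat.card (T.induce s).ConnectedComponent := by
    rw [← Set.ncard_univ]
    refine Set.ncard_congr (fun v _ => (T.induce s).connectedComponentMk v)
      (fun _ _ => trivial) ?_ ?_
    · exact fun v w hv hw h => hT.eq_of_parent_notMem_of_induce_eq hroot rfl h hv hw
    · intro K _
      obtain ⟨u, hu, hpu⟩ := hT.exists_parent_notMem_of_induce_eq hroot rfl K
      exact ⟨u, hpu, hu⟩
  rw [← hedges, ← hcomponents, Set.ncard_add_ncard_compl]

lemma le_of_induce_eq_of_parent_eq (hT : T.IsTree) {T' : SimpleGraph V} (hT' : T'.IsTree)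
    (hs : T.induce s = T'.induce s)
    (h : ∀ v, v ≠ root → (v ∉ s ∨ hT.parent root v ∉ s) → hT'.parent root v = hT.parent root v) :
    T ≤ T' := by
  have hparent : ∀ a, a ≠ root → T'.Adj a (hT.parent root a) := by
    intro a ha
    by_cases hin : a ∈ s ∧ hT.parent root a ∈ s
    · have hadj : (T.induce s).Adj ⟨a, hin.1⟩ ⟨_, hin.2⟩ := hT.adj_parent ha
      rw [hs] at hadj
      exact hadj
    · rw [← h a ha (by tauto)]
      exact hT'.adj_parent ha
  intro a b hab
  rcases (hT.adj_iff_parent (root := root)).mp hab with ⟨ha, rfl⟩ | ⟨hb, rfl⟩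
  · exact hparent a ha
  · exact (hparent b hb).symm

end SimpleGraph.IsTree

theorem SimpleGraph.card_isTree_induce_eq_le {V : Type*} [Finite V] {s : Set V}
    (F : SimpleGraph s) [Fintype F.ConnectedComponent] {root : V} (hroot : root ∉ s) :
    Nat.card {T : SimpleGraph V // T.IsTree ∧ T.induce s = F} ≤
      (∏ K : F.ConnectedComponent, Nat.card {x : s // F.connectedComponentMk x = K}) *
        sᶜ.ncard ^ Nat.card F.ConnectedComponent * (Nat.card V - 1) ^ (sᶜ.ncard - 1) := by
  classical
  set X := {T : SimpleGraph V // T.IsTree ∧ T.induce s = F}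
  choose top htop htop_parent using
    fun (T : X) => T.2.1.exists_parent_notMem_of_induce_eq hroot T.2.2
  let enc : X → ((K : F.ConnectedComponent) → {x : s // F.connectedComponentMk x = K}) ×
      (F.ConnectedComponent → ↥sᶜ) × ((u : ↥(sᶜ \ {root})) → ↥({(u : V)}ᶜ : Set V)) :=
    fun T => (fun K => ⟨top T K, htop T K⟩,
      fun K => ⟨T.2.1.parent root (top T K), htop_parent T K⟩,
      fun u => ⟨T.2.1.parent root u, (T.2.1.adj_parent u.2.2).ne'⟩)
  have hparent : ∀ T T' : X, enc T = enc T' → ∀ v, v ≠ root →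
      (v ∉ s ∨ T.2.1.parent root v ∉ s) → T'.2.1.parent root v = T.2.1.parent root v := by
    intro T T' h v hv hvs
    simp only [enc, Prod.mk.injEq, funext_iff, Subtype.ext_iff] at h
    obtain ⟨htops, hparents, houter⟩ := h
    by_cases hvs' : v ∈ s
    · set K := F.connectedComponentMk ⟨v, hvs'⟩
      have hv_top : top T K = ⟨v, hvs'⟩ := T.2.1.eq_of_parent_notMem_of_induce_eq hroot T.2.2
        (htop T K) (htop_parent T K) (hvs.resolve_left (not_not.mpr hvs'))
      have hv_top' : (top T' K : V) = v := by rw [← htops K, hv_top]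
      have h := hparents K
      rw [hv_top, hv_top'] at h
      exact h.symm
    · exact (houter ⟨v, hvs', hv⟩).symm
  have hinj : Function.Injective enc := fun T T' h => Subtype.ext <| le_antisymm
    (T.2.1.le_of_induce_eq_of_parent_eq T'.2.1 (T.2.2.trans T'.2.2.symm) (hparent T T' h))
    (T'.2.1.le_of_induce_eq_of_parent_eq T.2.1 (T'.2.2.trans T.2.2.symm) (hparent T' T h.symm))
  refine (Nat.card_le_card_of_injective enc hinj).trans_eq ?_
  have := Fintype.ofFinite ↥(sᶜ \ {root})
  have hcompl : ∀ u : V, Nat.card ↥({u}ᶜ : Set V) = Nat.card V - 1 := fun u => by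
    rw [Nat.card_coe_set_eq, Set.ncard_compl, Set.ncard_singleton]
  simp only [Nat.card_prod, Nat.card_pi, hcompl, Finset.prod_const, Finset.card_univ,
    ← Nat.card_eq_fintype_card, Nat.card_coe_set_eq]
  rw [Set.ncard_sdiff_singleton_of_mem hroot, mul_assoc]

theorem Real.prod_le_arith_mean_pow {ι : Type*} (t : Finset ι) (f : ι → ℝ)
    (hf : ∀ i ∈ t, 0 ≤ f i) : ∏ i ∈ t, f i ≤ ((∑ i ∈ t, f i) / t.card) ^ t.card := by
  rcases t.eq_empty_or_nonempty with rfl | ht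
  · simp
  have hn : (t.card : ℝ) ≠ 0 := by exact_mod_cast ht.card_pos.ne'
  have hamgm := Real.geom_mean_le_arith_mean_weighted t (fun _ => (t.card : ℝ)⁻¹) f
    (fun _ _ => by positivity) (by simp [hn]) hf
  rw [Real.finsetProd_rpow t f hf, ← Finset.mul_sum, inv_mul_eq_div] at hamgm
  calc ∏ i ∈ t, f i = ((∏ i ∈ t, f i) ^ (t.card : ℝ)⁻¹) ^ t.card :=
        (Real.rpow_inv_natCast_pow (Finset.prod_nonneg hf) ht.card_pos.ne').symm
    _ ≤ _ := pow_le_pow_left₀ (Real.rpow_nonneg (Finset.prod_nonneg hf) _) hamgm _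

theorem prod_card_fiber_le_pow {α β : Type*} [Finite α] [Fintype β] (f : α → β) :
    (∏ b, (Nat.card {a // f a = b} : ℝ)) ≤ (Nat.card α / Fintype.card β) ^ Fintype.card β := by
  have hsum : ∑ b, (Nat.card {a // f a = b} : ℝ) = Nat.card α := by
    rw [← Nat.card_congr (Equiv.sigmaFiberEquiv f), Nat.card_sigma, Nat.cast_sum]
  simpa [hsum] using Real.prod_le_arith_mean_pow Finset.univ
    (fun b => (Nat.card {a // f a = b} : ℝ)) fun b _ => Nat.cast_nonneg _

theorem pow_mul_add_sub_one_pow_le {m ℓ : ℕ} (c : ℕ) (hm : 1 ≤ m) (hℓ : 1 ≤ ℓ) :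
    m ^ c * (ℓ + m - 1) ^ (m - 1) ≤ m ^ (m + c - 2) * (ℓ + 1) ^ (m - 1) := by
  obtain rfl | ⟨n, rfl⟩ : m = 1 ∨ ∃ n, m = n + 2 := by
    obtain ⟨_ | n, rfl⟩ := Nat.exists_eq_add_of_le hm
    · exact .inl rfl
    · exact .inr ⟨n, by omega⟩
  · simp
  have hbase : 2 * (ℓ + n + 1) ≤ (n + 2) * (ℓ + 1) := by nlinarith
  have htwo : n + 2 ≤ 2 ^ (n + 1) := Nat.lt_two_pow_self
  have hscaled : 2 ^ (n + 1) * (ℓ + n + 1) ^ (n + 1) ≤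
      2 ^ (n + 1) * ((n + 2) ^ n * (ℓ + 1) ^ (n + 1)) :=
    calc 2 ^ (n + 1) * (ℓ + n + 1) ^ (n + 1) = (2 * (ℓ + n + 1)) ^ (n + 1) := (mul_pow ..).symm
      _ ≤ ((n + 2) * (ℓ + 1)) ^ (n + 1) := by gcongr
      _ = (n + 2) * ((n + 2) ^ n * (ℓ + 1) ^ (n + 1)) := by rw [mul_pow, pow_succ]; ring
      _ ≤ 2 ^ (n + 1) * ((n + 2) ^ n * (ℓ + 1) ^ (n + 1)) := by gcongr
  have hle := Nat.le_of_mul_le_mul_left hscaled (by positivity)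
  rw [show ℓ + (n + 2) - 1 = ℓ + n + 1 by omega, show n + 2 - 1 = n + 1 by omega,
    show n + 2 + c - 2 = c + n by omega]
  calc (n + 2) ^ c * (ℓ + n + 1) ^ (n + 1)
      ≤ (n + 2) ^ c * ((n + 2) ^ n * (ℓ + 1) ^ (n + 1)) := by gcongr
    _ = (n + 2) ^ (c + n) * (ℓ + 1) ^ (n + 1) := by ring

theorem tree_extension_count_large_r_general {B : Type*} [Fintype B] (k ℓ r : ℕ)
    (hB : Fintype.card B = k) (Υ : Finset B) (hΥ : Υ.card = ℓ)
    (hℓk : ℓ < k) (hr_hi : r < ℓ)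
    (F : SimpleGraph (↑Υ : Set B)) (hFr : F.edgeSet.ncard = r) :
    (Nat.card {T : SimpleGraph B // T.IsTree ∧ T.induce (↑Υ : Set B) = F} : ℝ) ≤
      ((ℓ : ℝ) / ((ℓ : ℝ) - (r : ℝ))) ^ (ℓ - r) * ((k : ℝ) - (ℓ : ℝ)) ^ (k - r - 2) *
        ((ℓ : ℝ) + 1) ^ (k - ℓ - 1) := by
  classical
  obtain ⟨c, rfl⟩ := Nat.exists_eq_add_of_le hr_hi.le
  obtain ⟨m, rfl⟩ := Nat.exists_eq_add_of_le hℓk.le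
  rw [show r + c + m - r - 2 = m + c - 2 by omega, Nat.add_sub_cancel_left, Nat.add_sub_cancel_left]
  simp only [Nat.cast_add, add_sub_cancel_left]
  rcases isEmpty_or_nonempty {T : SimpleGraph B // T.IsTree ∧ T.induce (↑Υ : Set B) = F}
    with hX | ⟨⟨T₀, hT₀, hT₀F⟩⟩
  · rw [Nat.card_of_isEmpty, Nat.cast_zero]
    positivity
  obtain ⟨root, -, hroot⟩ := Finset.exists_mem_notMem_of_card_lt_card (s := Υ) (t := .univ)
    (by rwa [hΥ, Finset.card_univ, hB])
  have hΥ' : Nat.card (↑Υ : Set B) = r + c := by rw [Nat.card_coe_set_eq, Set.ncard_coe_finset, hΥ]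
  have hcomponents : Nat.card F.ConnectedComponent = c := by
    have := hT₀.ncard_edgeSet_add_card_connectedComponent hroot hT₀F
    omega
  have hcompl : (↑Υ : Set B)ᶜ.ncard = m := by
    rw [Set.ncard_compl, Set.ncard_coe_finset, Nat.card_eq_fintype_card, hB, hΥ]
    omega
  have hcount := card_isTree_induce_eq_le F hroot
  rw [hcomponents, hcompl, Nat.card_eq_fintype_card (α := B), hB, mul_assoc] at hcount
  have hfibers := prod_card_fiber_le_pow F.connectedComponentMk
  rw [← Nat.card_eq_fintype_card, hcomponents, hΥ'] at hfibers
  have hnum := pow_mul_add_sub_one_pow_le c (ℓ := r + c) (by omega : 1 ≤ m) (by omega)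
  calc (Nat.card {T : SimpleGraph B // T.IsTree ∧ T.induce (↑Υ : Set B) = F} : ℝ)
      ≤ (∏ K, (Nat.card {x // F.connectedComponentMk x = K} : ℝ)) *
          ((m : ℝ) ^ c * ((r + c + m - 1 : ℕ) : ℝ) ^ (m - 1)) := by exact_mod_cast hcount
    _ ≤ (((r + c : ℕ) : ℝ) / c) ^ c * ((m : ℝ) ^ (m + c - 2) * ((r + c : ℕ) + 1 : ℝ) ^ (m - 1)) :=
        mul_le_mul hfibers (by exact_mod_cast hnum) (by positivity) (by positivity)
    _ = _ := by push_cast; ring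

/-- Let `B` be a vertex set of size `k`, `Υ ⊆ B` of size `ℓ`, and `F` a fixed forest on `Υ`
with exactly `r` edges, where `2 ≤ ℓ ≤ k−1` and `ℓ(1 − 1/e) ≤ r ≤ ℓ−1`. Then the number of
labelled trees on `B` inducing `F` on `Υ` is at most
`(ℓ/(ℓ−r))^{ℓ−r} · (k−ℓ)^{k−r−2} · (ℓ+1)^{k−ℓ−1}`. -/
theorem tree_extension_count_large_r {B : Type*} [Fintype B] (k ℓ r : ℕ)
    (hB : Fintype.card B = k) (Υ : Finset B) (hΥ : Υ.card = ℓ)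
    (hℓ2 : 2 ≤ ℓ) (hℓk : ℓ < k)
    (hr_lo : (ℓ : ℝ) * (1 - 1 / Real.exp 1) ≤ (r : ℝ)) (hr_hi : r < ℓ)
    (F : SimpleGraph (↑Υ : Set B)) (hF : F.IsAcyclic) (hFr : F.edgeSet.ncard = r) :
    (Nat.card {T : SimpleGraph B // T.IsTree ∧ T.induce (↑Υ : Set B) = F} : ℝ) ≤
      ((ℓ : ℝ) / ((ℓ : ℝ) - (r : ℝ))) ^ (ℓ - r) * ((k : ℝ) - (ℓ : ℝ)) ^ (k - r - 2) *
        ((ℓ : ℝ) + 1) ^ (k - ℓ - 1) :=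
  tree_extension_count_large_r_general k ℓ r hB Υ hΥ hℓk hr_hi F hFr
end

section
/- Let ℓ and r be integers with ℓ/2 ≤ r ≤ ℓ·(1 − 1/e), and let a_1, …, a_{ℓ−r} be positive integers with a_1 + … + a_{ℓ−r} = ℓ. Then the product a_1 · a_2 · ⋯ · a_{ℓ−r} is at most 3^{2r−ℓ} · 2^{2ℓ−3r}. In particular, for any forest on ℓ vertices with r edges where ℓ/2 ≤ r ≤ ℓ·(1 − 1/e), the product of the sizes of its ℓ−r connected components is at most 3^{2r−ℓ} · 2^{2ℓ−3r}. -/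
lemma aux_part_bound (a : ℕ) (h : 1 ≤ a) : 9 * 2 ^ a * a ≤ 8 * 3 ^ a := by
  induction a with
  | zero => omega
  | succ n ih =>
    rcases Nat.lt_or_ge n 2 with h2 | h2
    · interval_cases n <;> norm_num
    · have ihn := ih (by omega)
      have h3 : 2 * (n + 1) ≤ 3 * n := by omega
      calc 9 * 2 ^ (n + 1) * (n + 1) = (9 * 2 ^ n) * (2 * (n + 1)) := by ring
        _ ≤ (9 * 2 ^ n) * (3 * n) := Nat.mul_le_mul_left _ h3
        _ = 3 * (9 * 2 ^ n * n) := by ring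
        _ ≤ 3 * (8 * 3 ^ n) := Nat.mul_le_mul_left _ ihn
        _ = 8 * 3 ^ (n + 1) := by ring

/-- Let `ℓ/2 ≤ r ≤ ℓ(1 − 1/e)` and let positive integers `a 1, …, a (ℓ−r)` sum to `ℓ`. Then
their product is at most `3^{2r−ℓ}·2^{2ℓ−3r}`. (In particular, for a forest on `ℓ` vertices
with `r` edges in this range, the product of the sizes of its `ℓ−r` connected components is
at most `3^{2r−ℓ}·2^{2ℓ−3r}`.) -/
theorem prod_component_sizes_le_of_medium_r (ℓ r : ℕ)
    (hr_lo : ℓ ≤ 2 * r) (hr_hi : (r : ℝ) ≤ (ℓ : ℝ) * (1 - 1 / Real.exp 1))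
    (a : Fin (ℓ - r) → ℕ) (ha : ∀ i, 0 < a i) (hsum : ∑ i, a i = ℓ) :
    ∏ i, a i ≤ 3 ^ (2 * r - ℓ) * 2 ^ (2 * ℓ - 3 * r) := by
  -- From the real hypothesis, derive 3r ≤ 2ℓ
  have hexp : Real.exp 1 ≤ 3 := le_of_lt (by
    have := Real.exp_one_lt_d9; linarith)
  have hthird : (1 : ℝ) / 3 ≤ 1 / Real.exp 1 :=
    one_div_le_one_div_of_le (Real.exp_pos 1) hexp
  have h1R : (3 : ℝ) * r ≤ 2 * ℓ := by
    have hl0 : (0 : ℝ) ≤ (ℓ : ℝ) := Nat.cast_nonneg ℓ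
    nlinarith
  have h1 : 3 * r ≤ 2 * ℓ := by exact_mod_cast h1R
  have hrl : r ≤ ℓ := by omega
  have hcard : (Finset.univ : Finset (Fin (ℓ - r))).card = ℓ - r := by simp
  have step1 : 9 ^ (ℓ - r) * 2 ^ ℓ * ∏ i, a i = ∏ i, (9 * 2 ^ (a i) * a i) := by
    rw [Finset.prod_mul_distrib, Finset.prod_mul_distrib, Finset.prod_const,
      Finset.prod_pow_eq_pow_sum, hsum, Finset.card_univ, Fintype.card_fin]
  have step2 : ∏ i, (9 * 2 ^ (a i) * a i) ≤ ∏ i, (8 * 3 ^ (a i)) :=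
    Finset.prod_le_prod' (fun i _ => aux_part_bound (a i) (ha i))
  have step3 : ∏ i, (8 * 3 ^ (a i)) = 8 ^ (ℓ - r) * 3 ^ ℓ := by
    rw [Finset.prod_mul_distrib, Finset.prod_const,
      Finset.prod_pow_eq_pow_sum, hsum, Finset.card_univ, Fintype.card_fin]
  have e1 : 2 * (ℓ - r) + (2 * r - ℓ) = ℓ := by omega
  have e2 : ℓ + (2 * ℓ - 3 * r) = 3 * (ℓ - r) := by omega
  have hid : 9 ^ (ℓ - r) * 2 ^ ℓ * (3 ^ (2 * r - ℓ) * 2 ^ (2 * ℓ - 3 * r)) = 8 ^ (ℓ - r) * 3 ^ ℓ := by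
    have h9 : (9 : ℕ) ^ (ℓ - r) = 3 ^ (2 * (ℓ - r)) := by rw [pow_mul]; norm_num
    have h8 : (8 : ℕ) ^ (ℓ - r) = 2 ^ (3 * (ℓ - r)) := by rw [pow_mul]; norm_num
    calc 9 ^ (ℓ - r) * 2 ^ ℓ * (3 ^ (2 * r - ℓ) * 2 ^ (2 * ℓ - 3 * r))
        = 3 ^ (2 * (ℓ - r) + (2 * r - ℓ)) * 2 ^ (ℓ + (2 * ℓ - 3 * r)) := by
          rw [h9, pow_add, pow_add]; ring
      _ = 8 ^ (ℓ - r) * 3 ^ ℓ := by rw [e1, e2, h8]; ring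
  have hpos : 0 < 9 ^ (ℓ - r) * 2 ^ ℓ := by positivity
  apply Nat.le_of_mul_le_mul_left _ hpos
  calc 9 ^ (ℓ - r) * 2 ^ ℓ * ∏ i, a i = ∏ i, (9 * 2 ^ (a i) * a i) := step1
    _ ≤ ∏ i, (8 * 3 ^ (a i)) := step2
    _ = 8 ^ (ℓ - r) * 3 ^ ℓ := step3
    _ = 9 ^ (ℓ - r) * 2 ^ ℓ * (3 ^ (2 * r - ℓ) * 2 ^ (2 * ℓ - 3 * r)) := hid.symm
end

section
/- Let p ∈ (0,1) be constant. There exists ε₀ > 0 such that for every ε ∈ (0, ε₀) and every constant C > 0 with 1/C + 2ε·ln(1/ε) < (1/2)·ln(1/(1−p)), the following holds: for every sequence t(k) of non-negative integers with t(k) < ε·k² for all sufficiently large k, asymptotically almost surely G(n,p) contains no vertex subset of size k ≥ C·ln n whose induced subgraph has exactly t(k) edges. -/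
open MeasureTheory

/-- The binomial random graph `G(n,p)`, modeled as the product of Bernoulli(p) measures
on the indicators of the potential edges. -/
noncomputable def erdosRenyi (n : ℕ) {p : ℝ} (hp₀ : 0 ≤ p) (hp₁ : p ≤ 1) :
    Measure (Sym2 (Fin n) → Bool) :=
  Measure.pi fun _ =>
    (PMF.bernoulli (Real.toNNReal p) (Real.toNNReal_le_one.mpr hp₁)).toMeasure

/-- The graph determined by a sample of edge indicators. -/
def graphOf {n : ℕ} (x : Sym2 (Fin n) → Bool) : SimpleGraph (Fin n) where
  Adj i j := i ≠ j ∧ x s(i, j) = true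
  symm := ⟨fun i j ⟨hne, hx⟩ => ⟨hne.symm, by rwa [Sym2.eq_swap]⟩⟩
  loopless := ⟨fun i ⟨hne, _⟩ => hne rfl⟩

/-- The number of edges of the subgraph of `G` induced on the vertex subset `S`. -/
noncomputable def inducedEdgeCount {n : ℕ} (G : SimpleGraph (Fin n)) (S : Finset (Fin n)) : ℕ :=
  ((G.induce (↑S : Set (Fin n))).edgeSet).ncard

/-!
First moment method. A `k`-set spans exactly `m` edges only if, for some `m` of its
`K = C(k,2)` pairs, all the other pairs are non-edges, which has probability at most
`C(K, m) (1-p)^(K-m)`. With `L = log (1/(1-p))`, `C(n,k) ≤ n^k ≤ exp (k²/C)` for `k ≥ C log n`,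
and `C(K,m) ≤ exp (m log (K/m) + m)`, which is increasing in `m ≤ K`, so `m < εk²` bounds it by
`exp (εk² (log (1/ε) + 1))`. The expected number of bad `k`-sets is therefore at most
`exp (-δk² + Lk/2)` with `δ = L/2 - 1/C - 2ε log (1/ε) > 0`, which is at most `exp (-δk²/2)`
once `k ≥ L/δ`. Summing over the `n + 1` sizes `k ≥ C log n` gives
`(n + 1) exp (-δC² log² n / 2) → 0`.
-/

open Finset Real Filter Topology
open scoped ENNReal NNReal

section ProductBernoulli

variable {ι : Type*} [Fintype ι] {q : ℝ≥0} (hq : q ≤ 1)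

lemma pi_bernoulli_forall_false (B : Finset ι) :
    Measure.pi (fun _ : ι => (PMF.bernoulli q hq).toMeasure) {x | ∀ i ∈ B, x i = false}
      = ((1 - q : ℝ≥0) : ℝ≥0∞) ^ #B := by
  have hset : {x : ι → Bool | ∀ i ∈ B, x i = false} = (B : Set ι).pi fun _ => {false} := by
    ext x; simp
  rw [hset, Measure.pi_pi_finset, prod_const,
    PMF.toMeasure_apply_singleton _ _ (measurableSet_singleton _), PMF.bernoulli_apply]
  rfl

lemma pi_bernoulli_card_filter_eq_le [DecidableEq ι] (s : Finset ι) (m : ℕ) :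
    Measure.pi (fun _ : ι => (PMF.bernoulli q hq).toMeasure) {x | #{i ∈ s | x i = true} = m}
      ≤ (#s).choose m * ((1 - q : ℝ≥0) : ℝ≥0∞) ^ (#s - m) := by
  have hsub : {x : ι → Bool | #{i ∈ s | x i = true} = m}
      ⊆ ⋃ A ∈ s.powersetCard m, {x | ∀ i ∈ s \ A, x i = false} := by
    intro x hx
    refine Set.mem_biUnion (mem_powersetCard.mpr ⟨filter_subset _ s, hx⟩) ?_
    intro i hi
    simp_all
  calc _ ≤ ∑ A ∈ s.powersetCard m, Measure.pi (fun _ : ι => (PMF.bernoulli q hq).toMeasure)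
          {x | ∀ i ∈ s \ A, x i = false} :=
        (measure_mono hsub).trans (measure_biUnion_finset_le _ _)
    _ = _ := by
      rw [sum_congr rfl fun A hA => by
        rw [pi_bernoulli_forall_false, card_sdiff_of_subset (mem_powersetCard.mp hA).1,
          (mem_powersetCard.mp hA).2], sum_const, card_powersetCard, nsmul_eq_mul]

end ProductBernoulli

lemma measure_exists_finset_le {Ω α : Type*} [MeasurableSpace Ω] [Fintype α] (μ : Measure Ω)
    (P : ℕ → Prop) [DecidablePred P] (E : Finset α → Set Ω) (f : ℕ → ℝ≥0∞)
    (hE : ∀ S : Finset α, P #S → μ (E S) ≤ f #S) :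
    μ {ω | ∃ S : Finset α, P #S ∧ ω ∈ E S}
      ≤ ∑ k ∈ range (Fintype.card α + 1) with P k, (Fintype.card α).choose k * f k := by
  have hsub : {ω | ∃ S : Finset α, P #S ∧ ω ∈ E S}
      ⊆ ⋃ k ∈ {k ∈ range (Fintype.card α + 1) | P k}, ⋃ S ∈ univ.powersetCard k, E S := by
    rintro ω ⟨S, hS, hω⟩
    simp only [Set.mem_iUnion, mem_filter, mem_range, mem_powersetCard]
    exact ⟨#S, ⟨Nat.lt_succ_of_le (card_le_univ S), hS⟩, S, ⟨subset_univ S, rfl⟩, hω⟩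
  refine (measure_mono hsub).trans <| (measure_biUnion_finset_le _ _).trans <| sum_le_sum ?_
  intro k hk
  calc μ (⋃ S ∈ univ.powersetCard k, E S) ≤ ∑ S ∈ univ.powersetCard k, μ (E S) :=
        measure_biUnion_finset_le _ _
    _ ≤ ∑ S ∈ (univ : Finset α).powersetCard k, f k := sum_le_sum fun S hS => by
        obtain ⟨-, rfl⟩ := mem_powersetCard.mp hS
        exact hE S (mem_filter.mp hk).2
    _ = _ := by rw [sum_const, card_powersetCard, card_univ, nsmul_eq_mul]

lemma tendsto_measure_compl_nhds_one {β : Type*} {l : Filter β} {Ω : β → Type*}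
    [∀ b, MeasurableSpace (Ω b)] {μ : ∀ b, Measure (Ω b)} [∀ b, IsProbabilityMeasure (μ b)]
    {s : ∀ b, Set (Ω b)} (hs : ∀ b, MeasurableSet (s b))
    (h : Tendsto (fun b => μ b (s b)) l (𝓝 0)) :
    Tendsto (fun b => μ b (s b)ᶜ) l (𝓝 1) := by
  simp_rw [prob_compl_eq_one_sub (hs _)]
  simpa using ENNReal.Tendsto.sub tendsto_const_nhds h (Or.inl ENNReal.one_ne_top)

lemma inducedEdgeCount_graphOf {n : ℕ} (x : Sym2 (Fin n) → Bool) (S : Finset (Fin n)) :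
    inducedEdgeCount (graphOf x) S = #{e ∈ S.offDiag.image Sym2.mk.uncurry | x e = true} := by
  classical
  have hedges : (graphOf x).edgeFinset ∩ S.sym2
      = {e ∈ S.offDiag.image Sym2.mk.uncurry | x e = true} := by
    ext e
    induction e using Sym2.ind with
    | _ a b =>
      rw [mem_inter, SimpleGraph.mem_edgeFinset, SimpleGraph.mem_edgeSet]
      simp only [graphOf, mk_mem_sym2_iff, mem_filter, mem_image, mem_offDiag, Prod.exists,
        Function.uncurry_apply_pair, Sym2.eq_iff]
      grind
  rw [inducedEdgeCount, ← SimpleGraph.coe_edgeFinset, Set.ncard_coe_finset, ← hedges,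
    ← SimpleGraph.card_filter_edgeFinset_toFinset_subset,
    SimpleGraph.filter_edgeFinset_toFinset_subset]

instance isProbabilityMeasure_erdosRenyi {n : ℕ} {p : ℝ} (hp₀ : 0 ≤ p) (hp₁ : p ≤ 1) :
    IsProbabilityMeasure (erdosRenyi n hp₀ hp₁) := by
  unfold erdosRenyi; infer_instance

lemma erdosRenyi_inducedEdgeCount_eq_le {n : ℕ} {p : ℝ} (hp₀ : 0 ≤ p) (hp₁ : p ≤ 1)
    (S : Finset (Fin n)) (m : ℕ) :
    erdosRenyi n hp₀ hp₁ {x | inducedEdgeCount (graphOf x) S = m}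
      ≤ ENNReal.ofReal (((#S).choose 2).choose m * (1 - p) ^ ((#S).choose 2 - m)) := by
  classical
  simp_rw [inducedEdgeCount_graphOf]
  refine (pi_bernoulli_card_filter_eq_le _ _ m).trans_eq ?_
  rw [Sym2.card_image_offDiag, ENNReal.ofReal_mul (by positivity), ENNReal.ofReal_pow (by linarith),
    ENNReal.ofReal_natCast, ENNReal.ofReal_sub _ hp₀, ENNReal.ofReal_one, ENNReal.coe_sub,
    ENNReal.coe_one]
  rfl

lemma erdosRenyi_exists_inducedEdgeCount_eq_le {n : ℕ} {p : ℝ} (hp₀ : 0 ≤ p) (hp₁ : p ≤ 1)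
    (P : ℕ → Prop) [DecidablePred P] (t : ℕ → ℕ) :
    erdosRenyi n hp₀ hp₁ {x | ∃ S : Finset (Fin n), P #S ∧ inducedEdgeCount (graphOf x) S = t #S}
      ≤ ∑ k ∈ range (n + 1) with P k, ENNReal.ofReal
          (n.choose k * (k.choose 2).choose (t k) * (1 - p) ^ (k.choose 2 - t k)) := by
  refine (measure_exists_finset_le _ P (fun S => {x | inducedEdgeCount (graphOf x) S = t #S})
    (fun k => ENNReal.ofReal ((k.choose 2).choose (t k) * (1 - p) ^ (k.choose 2 - t k)))
    fun S _ => erdosRenyi_inducedEdgeCount_eq_le hp₀ hp₁ S (t #S)).trans_eq ?_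
  refine sum_congr (by rw [Fintype.card_fin]) fun k _ => ?_
  rw [Fintype.card_fin, ← ENNReal.ofReal_natCast, ← ENNReal.ofReal_mul (Nat.cast_nonneg _),
    mul_assoc]

lemma mul_log_div_add_le_of_le {N s t : ℝ} (ht : 0 ≤ t) (hts : t ≤ s) (hsN : s ≤ N) :
    t * log (N / t) + t ≤ s * log (N / s) + s := by
  have hlog : 0 ≤ log (N / s) := by
    rcases (ht.trans hts).eq_or_lt with hs | hs
    · simp [← hs]
    · exact log_nonneg ((one_le_div hs).mpr hsN)
  rcases ht.eq_or_lt with rfl | ht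
  · simpa using add_nonneg (mul_nonneg (ht.trans hts) hlog) (ht.trans hts)
  have hst : t * log (s / t) ≤ s - t := by
    have := mul_le_mul_of_nonneg_left (log_le_sub_one_of_pos (div_pos (ht.trans_le hts) ht)) ht.le
    rwa [mul_sub, mul_div_cancel₀ _ ht.ne', mul_one] at this
  have hs : 0 < s := ht.trans_le hts
  have hsplit : log (N / t) = log (N / s) + log (s / t) := by
    rw [← log_mul (div_pos (hs.trans_le hsN) hs).ne' (div_pos hs ht).ne',
      div_mul_div_cancel₀ hs.ne']
  nlinarith [mul_le_mul_of_nonneg_right hts hlog]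

lemma cast_choose_le_exp_mul_log_add (N t : ℕ) :
    (N.choose t : ℝ) ≤ exp (t * log (N / t) + t) := by
  rcases t.eq_zero_or_pos with rfl | ht
  · simp
  rcases N.eq_zero_or_pos with rfl | hN
  · simp [Nat.choose_eq_zero_of_lt ht]; positivity
  have ht' : (0 : ℝ) < t := Nat.cast_pos.mpr ht
  calc (N.choose t : ℝ) ≤ (N : ℝ) ^ t / t.factorial := Nat.choose_le_pow_div t N
    _ = (N / t : ℝ) ^ t * ((t : ℝ) ^ t / t.factorial) := by
        rw [div_pow]; field_simp
    _ ≤ (N / t : ℝ) ^ t * exp t := by gcongr; exact pow_div_factorial_le_exp _ ht'.le t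
    _ = exp (t * log (N / t) + t) := by
        rw [exp_add, exp_nat_mul, exp_log (by positivity)]

lemma cast_choose_le_exp_of_le {N t : ℕ} {s : ℝ} (hts : t ≤ s) (hsN : s ≤ N) :
    (N.choose t : ℝ) ≤ exp (s * log (N / s) + s) :=
  (cast_choose_le_exp_mul_log_add N t).trans <|
    exp_le_exp.mpr (mul_log_div_add_le_of_le (Nat.cast_nonneg t) hts hsN)

lemma cast_choose_le_exp_sq_div {n k : ℕ} {C : ℝ} (hC : 0 < C) (hk : C * log n ≤ k) :
    (n.choose k : ℝ) ≤ exp (k ^ 2 / C) := by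
  rcases n.eq_zero_or_pos with rfl | hn
  · rcases k.eq_zero_or_pos with rfl | hk
    · simp
    · simp [Nat.choose_eq_zero_of_lt hk]; positivity
  have hlog : log n ≤ k / C := by rw [le_div_iff₀ hC]; linarith
  calc (n.choose k : ℝ) ≤ (n : ℝ) ^ k := by exact_mod_cast Nat.choose_le_pow n k
    _ = exp (k * log n) := by rw [exp_nat_mul, exp_log (by positivity)]
    _ ≤ exp (k ^ 2 / C) := by
        gcongr
        calc (k : ℝ) * log n ≤ k * (k / C) := by gcongr
          _ = k ^ 2 / C := by ring

lemma choose_mul_choose_mul_pow_le_exp {p ε C δ : ℝ} (hp₀ : 0 ≤ p) (hp₁ : p < 1) (hε : 0 < ε)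
    (hε' : ε ≤ 1 / 4) (hεp : 1 + log (1 / (1 - p)) ≤ log (1 / ε)) (hC : 0 < C)
    (hδ : 1 / C + 2 * ε * log (1 / ε) + δ ≤ log (1 / (1 - p)) / 2)
    {n k m : ℕ} (hk : 2 ≤ k) (hkδ : log (1 / (1 - p)) ≤ δ * k) (hnk : C * log n ≤ k)
    (hm : m < ε * k ^ 2) :
    n.choose k * (k.choose 2).choose m * (1 - p) ^ (k.choose 2 - m) ≤ exp (-(δ / 2) * k ^ 2) := by
  set L := log (1 / (1 - p))
  have hL : 0 ≤ L := log_nonneg (by rw [le_div_iff₀ (by linarith)]; linarith)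
  have hk' : (2 : ℝ) ≤ k := by exact_mod_cast hk
  have hK : ((k.choose 2 : ℕ) : ℝ) = k * (k - 1) / 2 := Nat.cast_choose_two ℝ k
  have hs : 0 < ε * k ^ 2 := by positivity
  have hsK : ε * k ^ 2 ≤ k.choose 2 := by rw [hK]; nlinarith
  have hmK : m ≤ k.choose 2 := by exact_mod_cast hm.le.trans hsK
  have hedges : ((k.choose 2).choose m : ℝ) ≤ exp (ε * k ^ 2 * (log (1 / ε) + 1)) := by
    refine (cast_choose_le_exp_of_le hm.le hsK).trans (exp_le_exp.mpr ?_)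
    have : log ((k.choose 2 : ℕ) / (ε * k ^ 2)) ≤ log (1 / ε) :=
      log_le_log (div_pos (hs.trans_le hsK) hs) (by rw [div_le_div_iff₀ hs hε, hK]; nlinarith)
    nlinarith
  have hmissing : (1 - p) ^ (k.choose 2 - m) ≤ exp (-((k.choose 2 : ℕ) - ε * k ^ 2) * L) := by
    rw [← exp_log (by linarith : 0 < 1 - p), ← exp_nat_mul, Nat.cast_sub hmK]
    refine exp_le_exp.mpr ?_
    have : log (1 - p) = -L := by simp only [L, one_div, log_inv, neg_neg]
    rw [this]; nlinarith
  calc (n.choose k : ℝ) * (k.choose 2).choose m * (1 - p) ^ (k.choose 2 - m)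
      ≤ exp (k ^ 2 / C) * exp (ε * k ^ 2 * (log (1 / ε) + 1))
          * exp (-((k.choose 2 : ℕ) - ε * k ^ 2) * L) := by
        gcongr
        exact cast_choose_le_exp_sq_div hC hnk
    _ = exp (k ^ 2 / C + ε * k ^ 2 * (log (1 / ε) + 1) - ((k.choose 2 : ℕ) - ε * k ^ 2) * L) := by
        rw [← exp_add, ← exp_add]; ring_nf
    _ ≤ _ := by
        refine exp_le_exp.mpr ?_
        rw [hK, div_eq_mul_one_div _ C]
        nlinarith [mul_le_mul_of_nonneg_left hεp hs.le,
          mul_le_mul_of_nonneg_right hδ (sq_nonneg (k : ℝ)),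
          mul_le_mul_of_nonneg_right hkδ (by positivity : (0 : ℝ) ≤ k)]

lemma tendsto_mul_exp_neg_mul_log_sq {c : ℝ} (hc : 0 < c) :
    Tendsto (fun n : ℕ => ((n : ℝ) + 1) * exp (-c * log n ^ 2)) atTop (𝓝 0) := by
  have hlog : Tendsto (fun n : ℕ => log n) atTop atTop :=
    tendsto_log_atTop.comp tendsto_natCast_atTop_atTop
  refine squeeze_zero' (Eventually.of_forall fun n => by positivity)
    ?_ (tendsto_const_div_atTop_nhds_zero_nat 2)
  filter_upwards [hlog.eventually_ge_atTop (2 / c), eventually_ge_atTop 1] with n hn hn1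
  have hn0 : (0 : ℝ) < n := by exact_mod_cast hn1
  have hexp : exp (-c * log n ^ 2) ≤ exp (-2 * log n) := by
    refine exp_le_exp.mpr ?_
    have := mul_le_mul_of_nonneg_right ((div_le_iff₀ hc).mp hn)
      ((div_nonneg (by norm_num) hc.le).trans hn)
    nlinarith
  calc ((n : ℝ) + 1) * exp (-c * log n ^ 2) ≤ (2 * n) * exp (-2 * log n) := by
        gcongr; linarith [(Nat.one_le_cast (α := ℝ)).mpr hn1]
    _ = 2 / n := by
        rw [show (-2 : ℝ) * log n = -log n + -log n by ring, exp_add, exp_neg, exp_log hn0]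
        field_simp

lemma erdosRenyi_exists_large_inducedEdgeCount_eq_le {p ε C δ : ℝ} (hp₀ : 0 ≤ p) (hp₁ : p < 1)
    (hε : 0 < ε) (hε' : ε ≤ 1 / 4) (hεp : 1 + log (1 / (1 - p)) ≤ log (1 / ε)) (hC : 0 < C)
    (hδ : 1 / C + 2 * ε * log (1 / ε) + δ ≤ log (1 / (1 - p)) / 2) (hδ₀ : 0 < δ)
    {t : ℕ → ℕ} {k₀ : ℕ} (ht : ∀ k ≥ k₀, (t k : ℝ) < ε * k ^ 2) {n : ℕ}
    (hn : max (max 2 (k₀ : ℝ)) (log (1 / (1 - p)) / δ) ≤ C * log n) :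
    erdosRenyi n hp₀ hp₁.le
        {x | ∃ S : Finset (Fin n), C * log n ≤ #S ∧ inducedEdgeCount (graphOf x) S = t #S}
      ≤ ENNReal.ofReal ((n + 1) * exp (-(δ * C ^ 2 / 2) * log n ^ 2)) := by
  classical
  refine (erdosRenyi_exists_inducedEdgeCount_eq_le hp₀ hp₁.le (fun k : ℕ => C * log n ≤ k) t).trans
    <| (sum_le_card_nsmul _ _ (ENNReal.ofReal (exp (-(δ * C ^ 2 / 2) * log n ^ 2)))
      fun k hk => ?_).trans ?_
  · have hnk : C * log n ≤ k := (mem_filter.mp hk).2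
    have hM : max (max 2 (k₀ : ℝ)) (log (1 / (1 - p)) / δ) ≤ k := hn.trans hnk
    simp only [max_le_iff] at hM
    obtain ⟨⟨h2k, hk₀k⟩, hkδ⟩ := hM
    refine ENNReal.ofReal_le_ofReal <| (choose_mul_choose_mul_pow_le_exp hp₀ hp₁ hε hε' hεp hC hδ
      (by exact_mod_cast h2k) ((div_le_iff₀ hδ₀).mp hkδ |>.trans_eq (mul_comm _ _)) hnk
      (ht k (by exact_mod_cast hk₀k))).trans (exp_le_exp.mpr ?_)
    have hCn : 0 ≤ C * log n := by positivity
    have hsq : (C * log n) ^ 2 ≤ (k : ℝ) ^ 2 := pow_le_pow_left₀ hCn hnk 2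
    nlinarith [mul_le_mul_of_nonneg_left hsq hδ₀.le]
  · rw [nsmul_eq_mul, ENNReal.ofReal_mul (by positivity)]
    gcongr
    rw [show (n : ℝ) + 1 = ((n + 1 : ℕ) : ℝ) by push_cast; ring, ENNReal.ofReal_natCast]
    exact_mod_cast (card_filter_le _ _).trans_eq (card_range _)

lemma tendsto_erdosRenyi_exists_large_inducedEdgeCount_eq {p ε C δ : ℝ} (hp₀ : 0 ≤ p)
    (hp₁ : p < 1) (hε : 0 < ε) (hε' : ε ≤ 1 / 4) (hεp : 1 + log (1 / (1 - p)) ≤ log (1 / ε))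
    (hC : 0 < C) (hδ : 1 / C + 2 * ε * log (1 / ε) + δ ≤ log (1 / (1 - p)) / 2) (hδ₀ : 0 < δ)
    {t : ℕ → ℕ} (ht : ∀ᶠ k in atTop, (t k : ℝ) < ε * k ^ 2) :
    Tendsto (fun n : ℕ => erdosRenyi n hp₀ hp₁.le
        {x | ∃ S : Finset (Fin n), C * log n ≤ #S ∧ inducedEdgeCount (graphOf x) S = t #S})
      atTop (𝓝 0) := by
  obtain ⟨k₀, hk₀⟩ := eventually_atTop.mp ht
  have hbound : Tendsto
      (fun n : ℕ => ENNReal.ofReal ((n + 1) * exp (-(δ * C ^ 2 / 2) * log n ^ 2))) atTop (𝓝 0) := by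
    simpa using ENNReal.tendsto_ofReal (tendsto_mul_exp_neg_mul_log_sq (by positivity))
  have hlog : Tendsto (fun n : ℕ => C * log n) atTop atTop :=
    (tendsto_log_atTop.comp tendsto_natCast_atTop_atTop).const_mul_atTop hC
  refine tendsto_of_tendsto_of_tendsto_of_le_of_le' tendsto_const_nhds hbound
    (Eventually.of_forall fun n => zero_le) ?_
  filter_upwards [hlog.eventually_ge_atTop (max (max 2 (k₀ : ℝ)) (log (1 / (1 - p)) / δ))]
    with n hn
  exact erdosRenyi_exists_large_inducedEdgeCount_eq_le hp₀ hp₁ hε hε' hεp hC hδ hδ₀ hk₀ hn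

/-- There exists `ε₀ > 0` such that for every `ε ∈ (0, ε₀)` and every `C > 0` with
`1/C + 2ε ln(1/ε) < (1/2) ln(1/(1-p))`, for every sequence `t(k) < ε k²` (for large `k`),
a.a.s. `G(n,p)` contains no vertex subset of size `k ≥ C ln n` inducing exactly `t(k)` edges. -/
theorem no_large_induced_subgraph_with_t_edges
    (p : ℝ) (hp₀ : 0 < p) (hp₁ : p < 1) :
    ∃ ε₀ : ℝ, 0 < ε₀ ∧
      ∀ ε : ℝ, 0 < ε → ε < ε₀ →
        ∀ C : ℝ, 0 < C →
          1 / C + 2 * ε * Real.log (1 / ε) < (1 / 2) * Real.log (1 / (1 - p)) →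
          ∀ t : ℕ → ℕ,
            (∀ᶠ k in Filter.atTop, (t k : ℝ) < ε * (k : ℝ) ^ 2) →
            Filter.Tendsto
              (fun n : ℕ =>
                erdosRenyi n hp₀.le hp₁.le
                  {x | ∀ S : Finset (Fin n), C * Real.log n ≤ (S.card : ℝ) →
                        inducedEdgeCount (graphOf x) S ≠ t S.card})
              Filter.atTop (nhds 1) := by
  set L := log (1 / (1 - p))
  have hL : 0 < L := log_pos (by rw [lt_div_iff₀ (by linarith)]; linarith)
  -- `ε ≤ 1/4` gives `εk² ≤ C(k,2)`, and `ε ≤ exp (-(1 + L))` lets `εk² log (1/ε)` absorb the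
  -- error terms `εk² (1 + L)`.
  refine ⟨min (1 / 4) (exp (-(1 + L))), by positivity, fun ε hε hεε₀ C hC hCε t ht => ?_⟩
  have hε' : ε ≤ 1 / 4 := hεε₀.le.trans (min_le_left _ _)
  have hεL : 1 + L ≤ log (1 / ε) := by
    have := log_lt_log hε (hεε₀.trans_le (min_le_right _ _))
    rw [log_exp] at this
    rw [one_div, log_inv]; linarith
  have hbad := tendsto_erdosRenyi_exists_large_inducedEdgeCount_eq hp₀.le hp₁ hε hε' hεL hC
    (δ := L / 2 - (1 / C + 2 * ε * log (1 / ε))) (by linarith) (by linarith) ht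
  simpa [Set.compl_ofPred] using
    tendsto_measure_compl_nhds_one (fun n => (Set.toFinite _).measurableSet) hbad
end

section
/- For all positive real numbers a, b, A, B, the following inequality holds: (1 + a/A)^A · (1 + b/B)^B ≤ (1 + (a+b)/(A+B))^{A+B}. -/
/-! Weighted AM–GM with weights `A/(A+B)` and `B/(A+B)` at the points `1 + a/A` and `1 + b/B`,
whose weighted mean is `1 + (a+b)/(A+B)`, raised to the power `A + B`. -/

namespace Real

theorem rpow_mul_rpow_le_weighted_mean_rpow {x y A B : ℝ} (hx : 0 ≤ x) (hy : 0 ≤ y)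
    (hA : 0 ≤ A) (hB : 0 ≤ B) (hAB : 0 < A + B) :
    x ^ A * y ^ B ≤ ((A * x + B * y) / (A + B)) ^ (A + B) := by
  have hweights : A / (A + B) + B / (A + B) = 1 := by field_simp
  have hamgm : x ^ (A / (A + B)) * y ^ (B / (A + B)) ≤ (A * x + B * y) / (A + B) := by
    refine (geom_mean_le_arith_mean2_weighted (div_nonneg hA hAB.le) (div_nonneg hB hAB.le)
      hx hy hweights).trans_eq ?_
    field_simp
  calc x ^ A * y ^ B
      = (x ^ (A / (A + B)) * y ^ (B / (A + B))) ^ (A + B) := by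
        rw [mul_rpow (by positivity) (by positivity), ← rpow_mul hx, ← rpow_mul hy,
          div_mul_cancel₀ _ hAB.ne', div_mul_cancel₀ _ hAB.ne']
    _ ≤ ((A * x + B * y) / (A + B)) ^ (A + B) := by gcongr

end Real

/-- For all positive reals `a, b, A, B` one has
`(1 + a/A)^A · (1 + b/B)^B ≤ (1 + (a+b)/(A+B))^(A+B)`, with real exponents. -/
theorem rpow_mean_inequality (a b A B : ℝ) (ha : 0 < a) (hb : 0 < b) (hA : 0 < A)
    (hB : 0 < B) :
    (1 + a / A) ^ A * (1 + b / B) ^ B ≤ (1 + (a + b) / (A + B)) ^ (A + B) := by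
  have hmean : (A * (1 + a / A) + B * (1 + b / B)) / (A + B) = 1 + (a + b) / (A + B) := by
    field_simp
    ring
  rw [← hmean]
  exact Real.rpow_mul_rpow_le_weighted_mean_rpow (by positivity) (by positivity) hA.le hB.le
    (by positivity)
end

section
/- For every integer c ≥ 3 and every real number x > 1 + 2/c, one has x^{c+1} > c²·(x−1)² + 1. -/
lemma aux_poly_ineq (a t : ℝ) (ha3 : 3 ≤ a) (ht : 0 < t) (hct : 2 < a * t) :
    a ^ 2 * t ^ 2 + 1
      < 1 + (a+1) * t + (a+1)*a/2 * t^2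
        + (a+1)*a*(a-1)/6 * t^3
        + (a+1)*a*(a-1)*(a-2)/24 * t^4 := by
  have hcub : 2 * t^2 < a * t^3 := by
    nlinarith [mul_pos (by linarith : (0:ℝ) < a*t - 2) (pow_pos ht 2)]
  have hquart : 4 * t^2 < a^2 * t^4 := by
    nlinarith [mul_pos (mul_pos (by linarith : (0:ℝ) < a*t - 2)
      (by nlinarith : (0:ℝ) < a*t + 2)) (pow_pos ht 2)]
  nlinarith [mul_lt_mul_of_pos_left hcub (by nlinarith : (0:ℝ) < a*(a+1)*(a-1)),
    mul_lt_mul_of_pos_left hquart (by nlinarith : (0:ℝ) < (a+1)*(a-1)*(a-2)),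
    mul_pos ht ht, sq_nonneg (a*t), mul_pos (mul_pos ht ht) (by linarith : (0:ℝ) < a)]

/-- For every integer `c ≥ 3` and every real `x > 1 + 2/c`, one has
`x^(c+1) > c²·(x−1)² + 1`. -/
theorem pow_gt_sq_mul_sq_add_one (c : ℕ) (hc : 3 ≤ c) (x : ℝ)
    (hx : 1 + 2 / (c : ℝ) < x) :
    (c : ℝ) ^ 2 * (x - 1) ^ 2 + 1 < x ^ (c + 1) := by
  obtain ⟨m, rfl⟩ : ∃ m, c = m + 3 := ⟨c - 3, by omega⟩
  have hcR : (0:ℝ) < ((m:ℝ) + 3) := by positivity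
  have hcast : ((m + 3 : ℕ) : ℝ) = (m : ℝ) + 3 := by push_cast; ring
  set t : ℝ := x - 1 with htdef
  have hct : 2 < ((m:ℝ) + 3) * t := by
    rw [hcast] at hx
    have := (div_lt_iff₀ hcR).mp (by linarith : 2 / ((m:ℝ)+3) < t)
    linarith [this]
  have ht : 0 < t := by nlinarith
  -- binomial lower bound with 5 terms
  have hbin : ∑ k ∈ Finset.range 5, t ^ k * ((m + 4).choose k : ℝ) ≤ x ^ (m + 4) := by
    have hx1 : x = t + 1 := by ring
    rw [hx1, add_pow]
    simp only [one_pow, mul_one]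
    apply Finset.sum_le_sum_of_subset_of_nonneg
    · exact Finset.range_subset_range.mpr (by omega)
    · intro i _ _
      positivity
  have hsum : ∑ k ∈ Finset.range 5, t ^ k * ((m + 4).choose k : ℝ)
      = 1 + ((m:ℝ)+4) * t + (((m+4).choose 2 : ℕ) : ℝ) * t^2
        + (((m+4).choose 3 : ℕ) : ℝ) * t^3 + (((m+4).choose 4 : ℕ) : ℝ) * t^4 := by
    simp [Finset.sum_range_succ]
    push_cast
    ring
  have h2 : 2 * ((m+4).choose 2) = (m+4)*(m+3) := by
    have h := Nat.descFactorial_eq_factorial_mul_choose (m+4) 2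
    simp [Nat.descFactorial_succ, Nat.descFactorial_zero, Nat.factorial] at h
    rw [← h]; ring
  have h3 : 6 * ((m+4).choose 3) = (m+4)*(m+3)*(m+2) := by
    have h := Nat.descFactorial_eq_factorial_mul_choose (m+4) 3
    simp [Nat.descFactorial_succ, Nat.descFactorial_zero, Nat.factorial] at h
    rw [← h]; ring
  have h4 : 24 * ((m+4).choose 4) = (m+4)*(m+3)*(m+2)*(m+1) := by
    have h := Nat.descFactorial_eq_factorial_mul_choose (m+4) 4
    simp [Nat.descFactorial_succ, Nat.descFactorial_zero, Nat.factorial] at h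
    rw [← h]; ring
  have h2R : (((m+4).choose 2 : ℕ) : ℝ) = ((m:ℝ)+4)*((m:ℝ)+3)/2 := by
    have := congrArg (fun n : ℕ => (n : ℝ)) h2
    push_cast at this
    linarith
  have h3R : (((m+4).choose 3 : ℕ) : ℝ) = ((m:ℝ)+4)*((m:ℝ)+3)*((m:ℝ)+2)/6 := by
    have := congrArg (fun n : ℕ => (n : ℝ)) h3
    push_cast at this
    linarith
  have h4R : (((m+4).choose 4 : ℕ) : ℝ) = ((m:ℝ)+4)*((m:ℝ)+3)*((m:ℝ)+2)*((m:ℝ)+1)/24 := by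
    have := congrArg (fun n : ℕ => (n : ℝ)) h4
    push_cast at this
    linarith
  rw [hsum, h2R, h3R, h4R] at hbin
  have hkey := aux_poly_ineq ((m:ℝ)+3) t (by linarith [Nat.cast_nonneg (α := ℝ) m]) ht hct
  have hfin : ((m + 3 : ℕ) : ℝ) ^ 2 * t ^ 2 + 1 < x ^ (m + 4) := by
    rw [hcast]
    ring_nf at hkey hbin ⊢
    linarith [hkey, hbin]
  simpa using hfin
end

section
/- For every real number x with 1 < x < 2, one has ln x − ln(x−1) + ln(ln x) − ln 2 + 1 > 0. In particular, for every p ∈ (0, 1/2), ln( 2p / ((1−p)·ln(1/(1−p))) ) − 1 < ln(1/(1−p)). -/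
/-!
Since `1 - 1/x ≤ ln x`, we have `x - 1 ≤ x ln x`, i.e. `ln (x - 1) ≤ ln x + ln (ln x)` for `x > 1`;
the first claim then only needs `ln 2 < 1`. The second is the first at `x = 1/(1-p)`, where
`2p / ((1-p) ln (1/(1-p))) = 2(x-1) / ln x`.
-/

open Real

lemma sub_one_le_mul_log {x : ℝ} (hx : 0 < x) : x - 1 ≤ x * log x := by
  have h := mul_le_mul_of_nonneg_left (one_sub_inv_le_log_of_pos hx) hx.le
  rwa [mul_sub, mul_one, mul_inv_cancel₀ hx.ne'] at h

lemma log_sub_one_le_log_add_log_log {x : ℝ} (hx : 1 < x) :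
    log (x - 1) ≤ log x + log (log x) := by
  rw [← log_mul (by positivity) (log_pos hx).ne']
  exact log_le_log (by linarith) (sub_one_le_mul_log (by positivity))

lemma log_sub_log_sub_one_add_log_log_pos {x : ℝ} (hx : 1 < x) :
    0 < log x - log (x - 1) + log (log x) - log 2 + 1 := by
  have := log_sub_one_le_log_add_log_log hx
  have := log_two_lt_d9
  linarith

lemma log_two_mul_sub_one_div_log_sub_one_lt {x : ℝ} (hx : 1 < x) :
    log (2 * (x - 1) / log x) - 1 < log x := by
  have hlog := (log_pos hx).ne'
  have hsub := sub_pos.2 hx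
  rw [log_div (by positivity) hlog, log_mul two_ne_zero hsub.ne']
  linarith [log_sub_log_sub_one_add_log_log_pos hx]

/-- For every real `1 < x < 2`, `ln x − ln(x−1) + ln(ln x) − ln 2 + 1 > 0`.
In particular, for every `p ∈ (0, 1/2)`,
`ln(2p / ((1−p)·ln(1/(1−p)))) − 1 < ln(1/(1−p))`. -/
theorem log_inequality_on_one_two :
    (∀ x : ℝ, 1 < x → x < 2 →
      0 < Real.log x - Real.log (x - 1) + Real.log (Real.log x) - Real.log 2 + 1) ∧
      (∀ p : ℝ, 0 < p → p < 1 / 2 →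
        Real.log (2 * p / ((1 - p) * Real.log (1 / (1 - p)))) - 1 <
          Real.log (1 / (1 - p))) := by
  refine ⟨fun x hx _ => log_sub_log_sub_one_add_log_log_pos hx, fun p hp hp2 => ?_⟩
  have hq : 0 < 1 - p := by linarith
  have hx : 1 < 1 / (1 - p) := by rw [lt_div_iff₀ hq]; linarith
  have hsubst : 2 * p / ((1 - p) * log (1 / (1 - p))) =
      2 * (1 / (1 - p) - 1) / log (1 / (1 - p)) := by
    field_simp
    ring
  rw [hsubst]
  exact log_two_mul_sub_one_div_log_sub_one_lt hx
end

section
/- The function x ↦ (ln 4 + ln(x−1)) / ln x is strictly increasing on the interval (25/16, 2]; consequently, for every x ∈ (25/16, 2], one has (ln 4 + ln(x−1)) / ln x ≤ 2. -/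
/-!
The derivative of `(ln 4 + ln (x - 1)) / ln x` has the sign of
`g x = x ln x - (x - 1) ln (4 (x - 1))`. Since `g' x = ln x - ln (4 (x - 1)) < 0` for `x > 4/3`
and `g 2 = 0`, `g` is positive on `[4/3, 2)`, so the ratio is strictly increasing on `(4/3, 2]`,
and its value at `2` is `2`.
-/

open Real Set

noncomputable def logRatio (x : ℝ) : ℝ := (log 4 + log (x - 1)) / log x

noncomputable def logRatioDerivNum (x : ℝ) : ℝ := x * log x - (x - 1) * (log 4 + log (x - 1))

lemma hasDerivAt_log_sub_one {x : ℝ} (hx : 1 < x) :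
    HasDerivAt (fun y => log (y - 1)) (1 / (x - 1)) x :=
  ((hasDerivAt_id x).sub_const 1).log (by simp; linarith)

lemma hasDerivAt_logRatioDerivNum {x : ℝ} (hx : 1 < x) :
    HasDerivAt logRatioDerivNum (log x - log (4 * (x - 1))) x := by
  have hlog := (hasDerivAt_id' x).mul (hasDerivAt_log (by positivity : x ≠ 0))
  have hsub := ((hasDerivAt_id' x).sub_const 1).mul ((hasDerivAt_log_sub_one hx).const_add (log 4))
  refine (hlog.sub hsub).congr_deriv ?_
  have : x - 1 ≠ 0 := by linarith
  rw [log_mul (by norm_num) this]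
  field_simp
  ring

lemma log_four : log 4 = 2 * log 2 := by
  rw [show (4 : ℝ) = 2 ^ 2 by norm_num, log_pow, Nat.cast_ofNat]

lemma logRatioDerivNum_two : logRatioDerivNum 2 = 0 := by
  norm_num [logRatioDerivNum, log_four]

lemma strictAntiOn_logRatioDerivNum : StrictAntiOn logRatioDerivNum (Ici (4 / 3)) := by
  have hderiv : ∀ x ∈ Ici (4 / 3 : ℝ), HasDerivAt logRatioDerivNum (log x - log (4 * (x - 1))) x :=
    fun x hx => hasDerivAt_logRatioDerivNum (by linarith [mem_Ici.1 hx])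
  refine strictAntiOn_of_hasDerivWithinAt_neg (convex_Ici _)
    (fun x hx => (hderiv x hx).continuousAt.continuousWithinAt)
    (fun x hx => (hderiv x (interior_subset hx)).hasDerivWithinAt) fun x hx => ?_
  rw [interior_Ici, mem_Ioi] at hx
  have : log x < log (4 * (x - 1)) := log_lt_log (by linarith) (by linarith)
  linarith

lemma logRatioDerivNum_pos {x : ℝ} (hx : x ∈ Ico (4 / 3) 2) : 0 < logRatioDerivNum x := by
  simpa [logRatioDerivNum_two] using
    strictAntiOn_logRatioDerivNum hx.1 (by norm_num : (2 : ℝ) ∈ Ici (4 / 3)) hx.2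

lemma hasDerivAt_logRatio {x : ℝ} (hx : 1 < x) :
    HasDerivAt logRatio (logRatioDerivNum x / (x * (x - 1) * log x ^ 2)) x := by
  have hlog : log x ≠ 0 := (log_pos hx).ne'
  have hnum := (hasDerivAt_log_sub_one hx).const_add (log 4)
  refine (hnum.div (hasDerivAt_log (by positivity : x ≠ 0)) hlog).congr_deriv ?_
  have : x - 1 ≠ 0 := by linarith
  unfold logRatioDerivNum
  field_simp

theorem strictMonoOn_logRatio : StrictMonoOn logRatio (Ioc (4 / 3) 2) := by
  have hderiv : ∀ x ∈ Ioc (4 / 3 : ℝ) 2, HasDerivAt logRatio _ x :=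
    fun x hx => hasDerivAt_logRatio (by linarith [hx.1])
  refine strictMonoOn_of_hasDerivWithinAt_pos (convex_Ioc _ _)
    (fun x hx => (hderiv x hx).continuousAt.continuousWithinAt)
    (fun x hx => (hderiv x (interior_subset hx)).hasDerivWithinAt) fun x hx => ?_
  rw [interior_Ioc] at hx
  have hx1 : 1 < x := by linarith [hx.1]
  have := logRatioDerivNum_pos ⟨hx.1.le, hx.2⟩
  have := log_pos hx1
  have : 0 < x - 1 := by linarith
  positivity

lemma logRatio_two : logRatio 2 = 2 := by
  have : log 2 ≠ 0 := (log_pos one_lt_two).ne'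
  norm_num [logRatio, log_four, this]

/-- The function `x ↦ (ln 4 + ln(x−1)) / ln x` is strictly increasing on `(25/16, 2]`;
consequently it is at most `2` there. -/
theorem log_ratio_strictMonoOn_and_le_two :
    StrictMonoOn (fun x : ℝ => (Real.log 4 + Real.log (x - 1)) / Real.log x)
        (Set.Ioc (25 / 16 : ℝ) 2) ∧
      ∀ x ∈ Set.Ioc (25 / 16 : ℝ) 2,
        (Real.log 4 + Real.log (x - 1)) / Real.log x ≤ 2 := by
  have hsub : Ioc (25 / 16 : ℝ) 2 ⊆ Ioc (4 / 3) 2 := Ioc_subset_Ioc_left (by norm_num)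
  have hmono : StrictMonoOn logRatio (Ioc (25 / 16 : ℝ) 2) := strictMonoOn_logRatio.mono hsub
  refine ⟨hmono, fun x hx => ?_⟩
  rw [← logRatio_two]
  exact hmono.le_iff_le hx (right_mem_Ioc.2 (by norm_num)) |>.2 hx.2
end
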